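/- Fix the shared-seed coordinated sampling setup. A function f : V → ℝ_{≥0} has a nonnegative unbiased estimator that is bounded on every data vector (i.e. sup_{u∈(0,1]} f̂(u,v) < ∞ for all v ∈ V) if and only if for every v ∈ V, limsup_{u→0⁺} (f(v) − f̲^{(v)}(u))/u < ∞. -/

import Mathlib

open MeasureTheory Set Filter Topology

noncomputable section

/-- A shared-seed coordinated sampling scheme on a data domain `V ⊆ ℝ_{≥0}^r`:
continuous non-decreasing seed-to-threshold maps `τ i : [0,1] → ℝ` whose range
infimum is at most the infimum of the `i`-th coordinate over the domain. -/
structure CoordScheme (r : ℕ) where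
  V : Set (Fin r → ℝ)
  τ : Fin r → ℝ → ℝ
  V_nonneg : ∀ v ∈ V, ∀ i, 0 ≤ v i
  τ_cont : ∀ i, ContinuousOn (τ i) (Set.Icc 0 1)
  τ_mono : ∀ i, MonotoneOn (τ i) (Set.Icc 0 1)
  τ_inf : ∀ i, sInf (τ i '' Set.Icc 0 1) ≤ sInf ((fun v => v i) '' V)

namespace CoordScheme

variable {r : ℕ}

/-- The set `S(u,v)` of sampled entries: `i` is sampled iff `v i ≥ τ i u`. -/
def sampled (C : CoordScheme r) (u : ℝ) (v : Fin r → ℝ) : Set (Fin r) :=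
  {i | C.τ i u ≤ v i}

/-- The consistent set `V*(u,v)` of data vectors consistent with the outcome `S(u,v)`. -/
def Vstar (C : CoordScheme r) (u : ℝ) (v : Fin r → ℝ) : Set (Fin r → ℝ) :=
  {z ∈ C.V | ∀ i, (C.τ i u ≤ v i → z i = v i) ∧ (v i < C.τ i u → z i < C.τ i u)}

/-- The lower bound function `f̲(u,v) = inf { f z : z ∈ V*(u,v) }`. -/
def lb (C : CoordScheme r) (f : (Fin r → ℝ) → ℝ) (u : ℝ) (v : Fin r → ℝ) : ℝ :=
  sInf (f '' C.Vstar u v)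

/-- An estimator: an integrable function of the outcome (it takes equal values on
data vectors consistent with the same outcome). -/
structure IsEstimator (C : CoordScheme r) (fhat : ℝ → (Fin r → ℝ) → ℝ) : Prop where
  integrable : ∀ v ∈ C.V, IntegrableOn (fun u => fhat u v) (Set.Ioc (0:ℝ) 1)
  consistent : ∀ u ∈ Set.Ioc (0:ℝ) 1, ∀ v ∈ C.V, ∀ z ∈ C.Vstar u v, fhat u v = fhat u z

/-- A nonnegative estimator. -/
def Nonneg (C : CoordScheme r) (fhat : ℝ → (Fin r → ℝ) → ℝ) : Prop :=
  ∀ u ∈ Set.Ioc (0:ℝ) 1, ∀ v ∈ C.V, 0 ≤ fhat u v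

/-- An unbiased estimator of `f`. -/
def Unbiased (C : CoordScheme r) (f : (Fin r → ℝ) → ℝ)
    (fhat : ℝ → (Fin r → ℝ) → ℝ) : Prop :=
  ∀ v ∈ C.V, (∫ u in Set.Ioc (0:ℝ) 1, fhat u v) = f v

end CoordScheme

/-- Lower convex hull of `g` on `(0,1]`: the pointwise largest convex function
bounded above by `g` there. -/
def lowerHull (g : ℝ → ℝ) (u : ℝ) : ℝ :=
  sSup {y : ℝ | ∃ h : ℝ → ℝ, ConvexOn ℝ (Set.Ioc (0:ℝ) 1) h ∧
      (∀ x ∈ Set.Ioc (0:ℝ) 1, h x ≤ g x) ∧ y = h u}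

namespace CoordScheme

variable {r : ℕ}

/-- The `v`-optimal estimates: the negated derivative of the lower hull of the
lower-bound function `u ↦ f̲(u,v)`. -/
def optEst (C : CoordScheme r) (f : (Fin r → ℝ) → ℝ) (v : Fin r → ℝ) (u : ℝ) : ℝ :=
  -deriv (lowerHull (fun x => C.lb f x v)) u

/-- Cumulative integral `∫_{2^{-j}}^1` of the J estimator (by its defining recursion):
`Jint (j+1) = Jint j + (value on `(2^{-j-1},2^{-j}]`) ⬝ 2^{-j-1}`. -/
def Jint (C : CoordScheme r) (f : (Fin r → ℝ) → ℝ) (v : Fin r → ℝ) : ℕ → ℝ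
  | 0 => 0
  | (j+1) => Jint C f v j +
      ((2:ℝ) ^ (j+1) * (C.lb f ((2:ℝ) ^ (-(j:ℤ))) v - Jint C f v j)) * (2:ℝ) ^ (-(j:ℤ) - 1)

/-- The (constant) value of the J estimator on the dyadic interval `(2^{-j-1}, 2^{-j}]`.
For `j = 0` this is `2 ⬝ f̲(1,v)`; for `j ≥ 1` it is
`2^{j+1} ⬝ ( f̲(2^{-j},v) − ∫_{2^{-j}}^1 f̂⁽ᴶ⁾(x,v) dx )`. -/
def Jval (C : CoordScheme r) (f : (Fin r → ℝ) → ℝ) (v : Fin r → ℝ) (j : ℕ) : ℝ :=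
  (2:ℝ) ^ (j+1) * (C.lb f ((2:ℝ) ^ (-(j:ℤ))) v - Jint C f v j)

/-- The J estimator `f̂⁽ᴶ⁾(u,v)`: on `u ∈ (2^{-j-1}, 2^{-j}]` it takes the value `Jval j`. -/
def Jest (C : CoordScheme r) (f : (Fin r → ℝ) → ℝ) (u : ℝ) (v : Fin r → ℝ) : ℝ :=
  C.Jval f v ⌊-Real.logb 2 u⌋₊

end CoordScheme

/-!
If `f̂(·, v) ≤ M`, every `z` consistent with `(u, v)` has the same estimates as `v` on `(u, 1]`,
so unbiasedness and nonnegativity give `f z ≥ f v - M u`, i.e. `f v - f̲(u, v) ≤ M u`.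

Conversely, the J estimator is constant on each dyadic piece `(2^{-j-1}, 2^{-j}]`, with values
chosen so that its integral over `(2^{-j-1}, 1]` is `f̲(2^{-j}, v)`. It therefore only depends
on `f̲` at seeds `≥ u`, i.e. on the outcome; it is nonnegative since `f̲` is non-increasing in
the seed; on piece `j + 1` it equals `2^{j+2} (f̲(2^{-j-1}, v) - f̲(2^{-j}, v))`, which is at most
`4 (f v - f̲(2^{-j}, v)) / 2^{-j}` and hence bounded; and its total integral is
`lim f̲(2^{-j}, v) = f v`.
-/

def dyadicIoc (j : ℕ) : Set ℝ :=
  Ioc ((2:ℝ) ^ (-(j:ℤ) - 1)) ((2:ℝ) ^ (-(j:ℤ)))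

lemma measurableSet_dyadicIoc (j : ℕ) : MeasurableSet (dyadicIoc j) :=
  measurableSet_Ioc

lemma mem_dyadicIoc_iff {u : ℝ} (hu : 0 < u) {j : ℕ} :
    u ∈ dyadicIoc j ↔ (j:ℝ) ≤ -Real.logb 2 u ∧ -Real.logb 2 u < j + 1 := by
  simp only [dyadicIoc, mem_Ioc, ← Real.rpow_intCast,
    ← Real.lt_logb_iff_rpow_lt one_lt_two hu, ← Real.logb_le_iff_le_rpow one_lt_two hu]
  push_cast
  constructor <;> rintro ⟨h₁, h₂⟩ <;> constructor <;> linarith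

lemma floor_neg_logb_eq_of_mem_dyadicIoc {u : ℝ} {j : ℕ} (hu : u ∈ dyadicIoc j) :
    ⌊-Real.logb 2 u⌋₊ = j := by
  have hpos : 0 < u := (zpow_pos two_pos _).trans hu.1
  obtain ⟨h₁, h₂⟩ := (mem_dyadicIoc_iff hpos).1 hu
  exact (Nat.floor_eq_iff ((Nat.cast_nonneg j).trans h₁)).2 ⟨h₁, h₂⟩

lemma mem_dyadicIoc_floor_neg_logb {u : ℝ} (hu : u ∈ Ioc (0:ℝ) 1) :
    u ∈ dyadicIoc ⌊-Real.logb 2 u⌋₊ := by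
  have hlog : 0 ≤ -Real.logb 2 u := neg_nonneg.2 (Real.logb_nonpos one_lt_two hu.1.le hu.2)
  exact (mem_dyadicIoc_iff hu.1).2 ⟨Nat.floor_le hlog, Nat.lt_floor_add_one _⟩

lemma iUnion_dyadicIoc : ⋃ j, dyadicIoc j = Ioc (0:ℝ) 1 := by
  refine Subset.antisymm (iUnion_subset fun j u hu => ?_) fun u hu =>
    mem_iUnion.2 ⟨_, mem_dyadicIoc_floor_neg_logb hu⟩
  exact ⟨(zpow_pos two_pos _).trans hu.1,
    hu.2.trans (zpow_le_one_of_nonpos₀ one_le_two (by omega))⟩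

lemma pairwise_disjoint_dyadicIoc : Pairwise (Function.onFun Disjoint dyadicIoc) :=
  fun _ _ hij => disjoint_left.2 fun _ hi hj => hij <|
    (floor_neg_logb_eq_of_mem_dyadicIoc hi).symm.trans (floor_neg_logb_eq_of_mem_dyadicIoc hj)

lemma volume_real_dyadicIoc (j : ℕ) : volume.real (dyadicIoc j) = (2:ℝ) ^ (-(j:ℤ) - 1) := by
  have h : (2:ℝ) ^ (-(j:ℤ)) = 2 ^ (-(j:ℤ) - 1) * 2 := by
    rw [← zpow_add_one₀ two_ne_zero, sub_add_cancel]
  rw [dyadicIoc, Real.volume_real_Ioc_of_le (zpow_le_zpow_right₀ one_le_two (by omega)), h]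
  ring

lemma two_zpow_mem_Icc {k : ℤ} (hk : k ≤ 0) : (2:ℝ) ^ k ∈ Icc (0:ℝ) 1 :=
  ⟨(zpow_pos two_pos k).le, zpow_le_one_of_nonpos₀ one_le_two hk⟩

lemma tendsto_two_zpow_neg_nhdsGT :
    Tendsto (fun n : ℕ => (2:ℝ) ^ (-(n:ℤ))) atTop (𝓝[>] 0) := by
  simp only [zpow_neg, zpow_natCast]
  exact tendsto_inv_atTop_nhdsGT_zero.comp (tendsto_pow_atTop_atTop_of_one_lt one_lt_two)

namespace CoordScheme

variable {r : ℕ} {C : CoordScheme r} {f : (Fin r → ℝ) → ℝ} {u x : ℝ} {v z : Fin r → ℝ}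

lemma mem_Vstar_self (hv : v ∈ C.V) : v ∈ C.Vstar u v :=
  ⟨hv, fun _ => ⟨fun _ => rfl, id⟩⟩

lemma Vstar_mono (hu : u ∈ Icc (0:ℝ) 1) (hx : x ∈ Icc (0:ℝ) 1) (hux : u ≤ x) :
    C.Vstar u v ⊆ C.Vstar x v := by
  intro z ⟨hzV, hz⟩
  have hτ i : C.τ i u ≤ C.τ i x := C.τ_mono i hu hx hux
  refine ⟨hzV, fun i => ⟨fun h => (hz i).1 ((hτ i).trans h), fun h => ?_⟩⟩
  rcases le_or_gt (C.τ i u) (v i) with h' | h'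
  · exact (hz i).1 h' ▸ h
  · exact ((hz i).2 h').trans_le (hτ i)

lemma Vstar_eq_of_mem (hz : z ∈ C.Vstar u v) : C.Vstar u z = C.Vstar u v := by
  obtain ⟨-, hz⟩ := hz
  ext w
  refine and_congr_right fun _ => forall_congr' fun i => ?_
  rcases le_or_gt (C.τ i u) (v i) with h | h
  · simp [(hz i).1 h, h, not_lt.2 h]
  · simp [h, not_le.2 h, not_le.2 ((hz i).2 h), (hz i).2 h]

lemma lb_eq_of_mem_Vstar (hu : u ∈ Icc (0:ℝ) 1) (hx : x ∈ Icc (0:ℝ) 1) (hux : u ≤ x)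
    (hz : z ∈ C.Vstar u v) : C.lb f x z = C.lb f x v := by
  rw [lb, lb, Vstar_eq_of_mem (Vstar_mono hu hx hux hz)]

lemma bddBelow_image_Vstar (hf : ∀ v ∈ C.V, 0 ≤ f v) : BddBelow (f '' C.Vstar u v) :=
  ⟨0, by rintro _ ⟨z, hz, rfl⟩; exact hf z hz.1⟩

lemma lb_nonneg (hf : ∀ v ∈ C.V, 0 ≤ f v) : 0 ≤ C.lb f u v :=
  Real.sInf_nonneg (by rintro _ ⟨z, hz, rfl⟩; exact hf z hz.1)

lemma lb_le (hf : ∀ v ∈ C.V, 0 ≤ f v) (hv : v ∈ C.V) : C.lb f u v ≤ f v :=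
  csInf_le (bddBelow_image_Vstar hf) ⟨v, mem_Vstar_self hv, rfl⟩

lemma lb_anti (hf : ∀ v ∈ C.V, 0 ≤ f v) (hv : v ∈ C.V)
    (hu : u ∈ Icc (0:ℝ) 1) (hx : x ∈ Icc (0:ℝ) 1) (hux : u ≤ x) :
    C.lb f x v ≤ C.lb f u v :=
  csInf_le_csInf (bddBelow_image_Vstar hf) ⟨f v, v, mem_Vstar_self hv, rfl⟩
    (image_mono (Vstar_mono hu hx hux))

lemma setIntegral_Ioc_eq_of_mem_Vstar {fhat : ℝ → (Fin r → ℝ) → ℝ} (hest : C.IsEstimator fhat)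
    (hv : v ∈ C.V) (hu : 0 ≤ u) (hz : z ∈ C.Vstar u v) :
    ∫ x in Ioc u 1, fhat x v = ∫ x in Ioc u 1, fhat x z :=
  setIntegral_congr_fun measurableSet_Ioc fun x hx =>
    hest.consistent x ⟨hu.trans_lt hx.1, hx.2⟩ v hv z
      (Vstar_mono ⟨hu, hx.1.le.trans hx.2⟩ ⟨hu.trans hx.1.le, hx.2⟩ hx.1.le hz)

lemma setIntegral_Ioc_zero_one_eq_add {g : ℝ → ℝ} (hg : IntegrableOn g (Ioc 0 1))
    (hu : u ∈ Icc (0:ℝ) 1) :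
    ∫ x in Ioc 0 1, g x = (∫ x in Ioc 0 u, g x) + ∫ x in Ioc u 1, g x := by
  rw [← Ioc_union_Ioc_eq_Ioc hu.1 hu.2]
  exact setIntegral_union (Ioc_disjoint_Ioc_of_le le_rfl) measurableSet_Ioc
    (hg.mono_set (Ioc_subset_Ioc_right hu.2)) (hg.mono_set (Ioc_subset_Ioc_left hu.1))

lemma sub_mul_le_of_mem_Vstar {fhat : ℝ → (Fin r → ℝ) → ℝ} (hest : C.IsEstimator fhat)
    (hnn : C.Nonneg fhat) (hub : C.Unbiased f fhat) (hv : v ∈ C.V) {M : ℝ}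
    (hM : ∀ x ∈ Ioc (0:ℝ) 1, fhat x v ≤ M) (hu : u ∈ Ioc (0:ℝ) 1) (hz : z ∈ C.Vstar u v) :
    f v - M * u ≤ f z := by
  have hu' : u ∈ Icc (0:ℝ) 1 := Ioc_subset_Icc_self hu
  have hsub : Ioc 0 u ⊆ Ioc (0:ℝ) 1 := Ioc_subset_Ioc_right hu.2
  have hsplit_v := setIntegral_Ioc_zero_one_eq_add (hest.integrable v hv) hu'
  have hsplit_z := setIntegral_Ioc_zero_one_eq_add (hest.integrable z hz.1) hu'
  have htail := setIntegral_Ioc_eq_of_mem_Vstar hest hv hu'.1 hz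
  have hhead_z : 0 ≤ ∫ x in Ioc 0 u, fhat x z :=
    setIntegral_nonneg measurableSet_Ioc fun x hx => hnn x (hsub hx) z hz.1
  have hhead_v : ∫ x in Ioc 0 u, fhat x v ≤ M * u := by
    calc ∫ x in Ioc 0 u, fhat x v ≤ ∫ _ in Ioc 0 u, M :=
          setIntegral_mono_on ((hest.integrable v hv).mono_set hsub)
            (integrableOn_const measure_Ioc_lt_top.ne) measurableSet_Ioc
            fun x hx => hM x (hsub hx)
      _ = M * u := by simp [Real.volume_real_Ioc_of_le hu.1.le, mul_comm]
  rw [← hub v hv, ← hub z hz.1]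
  linarith

lemma sub_lb_le_mul {fhat : ℝ → (Fin r → ℝ) → ℝ} (hest : C.IsEstimator fhat)
    (hnn : C.Nonneg fhat) (hub : C.Unbiased f fhat) (hv : v ∈ C.V) {M : ℝ}
    (hM : ∀ x ∈ Ioc (0:ℝ) 1, fhat x v ≤ M) (hu : u ∈ Ioc (0:ℝ) 1) :
    f v - C.lb f u v ≤ M * u := by
  have : f v - M * u ≤ C.lb f u v :=
    le_csInf ⟨f v, v, mem_Vstar_self hv, rfl⟩ fun _ ⟨z, hz, hfz⟩ =>
      hfz ▸ sub_mul_le_of_mem_Vstar hest hnn hub hv hM hu hz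
  linarith

lemma Jint_succ (j : ℕ) : C.Jint f v (j + 1) = C.lb f ((2:ℝ) ^ (-(j:ℤ))) v := by
  have h : (2:ℝ) ^ (j + 1) * (2:ℝ) ^ (-(j:ℤ) - 1) = 1 := by
    rw [show -(j:ℤ) - 1 = -((j + 1 : ℕ) : ℤ) by push_cast; ring, zpow_neg, zpow_natCast,
      mul_inv_cancel₀ (pow_ne_zero _ two_ne_zero)]
  rw [Jint, mul_right_comm, h, one_mul, add_sub_cancel]

lemma Jint_eq_sum (n : ℕ) :
    C.Jint f v n = ∑ j ∈ Finset.range n, C.Jval f v j * (2:ℝ) ^ (-(j:ℤ) - 1) := by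
  induction n with
  | zero => rfl
  | succ n ih => rw [Finset.sum_range_succ, ← ih]; rfl

lemma Jval_zero : C.Jval f v 0 = 2 * C.lb f 1 v := by
  simp [Jval, Jint]

lemma Jval_succ (j : ℕ) :
    C.Jval f v (j + 1) =
      (2:ℝ) ^ (j + 2) * (C.lb f ((2:ℝ) ^ (-(j:ℤ) - 1)) v - C.lb f ((2:ℝ) ^ (-(j:ℤ))) v) := by
  rw [Jval, Jint_succ]
  push_cast
  ring_nf

lemma Jval_nonneg (hf : ∀ v ∈ C.V, 0 ≤ f v) (hv : v ∈ C.V) (j : ℕ) : 0 ≤ C.Jval f v j := by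
  cases j with
  | zero => rw [Jval_zero]; exact mul_nonneg zero_le_two (lb_nonneg hf)
  | succ k =>
    rw [Jval_succ]
    exact mul_nonneg (by positivity) (sub_nonneg.2 (lb_anti hf hv (two_zpow_mem_Icc (by omega))
      (two_zpow_mem_Icc (by omega)) (zpow_le_zpow_right₀ one_le_two (by omega))))

lemma Jval_succ_le (hf : ∀ v ∈ C.V, 0 ≤ f v) (hv : v ∈ C.V) (k : ℕ) :
    C.Jval f v (k + 1) ≤ 4 * ((f v - C.lb f ((2:ℝ) ^ (-(k:ℤ))) v) / (2:ℝ) ^ (-(k:ℤ))) := by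
  have h4 : (2:ℝ) ^ (k + 2) = 4 / (2:ℝ) ^ (-(k:ℤ)) := by
    rw [zpow_neg, zpow_natCast, div_inv_eq_mul, pow_add]
    norm_num [mul_comm]
  rw [Jval_succ, h4, div_mul_eq_mul_div, mul_div_assoc]
  gcongr
  exact lb_le hf hv

lemma Jval_eq_of_mem_Vstar (hu : u ∈ Icc (0:ℝ) 1) (hz : z ∈ C.Vstar u v) {j : ℕ}
    (huj : u ≤ (2:ℝ) ^ (-(j:ℤ))) : C.Jval f z j = C.Jval f v j := by
  have hlb {k : ℤ} (hjk : -(j:ℤ) ≤ k) (hk : k ≤ 0) :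
      C.lb f ((2:ℝ) ^ k) z = C.lb f ((2:ℝ) ^ k) v :=
    lb_eq_of_mem_Vstar hu (two_zpow_mem_Icc hk)
      (huj.trans (zpow_le_zpow_right₀ one_le_two hjk)) hz
  cases j with
  | zero => simpa [Jval_zero] using hlb le_rfl le_rfl
  | succ k =>
    rw [Jval_succ, Jval_succ, hlb (by push_cast; omega) (by omega), hlb (by omega) (by omega)]

lemma Jest_eq_of_mem_dyadicIoc {j : ℕ} (hu : u ∈ dyadicIoc j) : C.Jest f u v = C.Jval f v j := by
  rw [Jest, floor_neg_logb_eq_of_mem_dyadicIoc hu]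

lemma measurable_Jest : Measurable fun u => C.Jest f u v :=
  measurable_from_top.comp (Nat.measurable_floor.comp (Real.measurable_log.div_const _).neg)

lemma tendsto_lb_nhdsGT (hf : ∀ v ∈ C.V, 0 ≤ f v) (hv : v ∈ C.V) {M : ℝ}
    (hM : ∀ᶠ u in 𝓝[>] 0, (f v - C.lb f u v) / u ≤ M) :
    Tendsto (fun u => C.lb f u v) (𝓝[>] 0) (𝓝 (f v)) := by
  have hlow : Tendsto (fun u => f v - M * u) (𝓝[>] 0) (𝓝 (f v)) :=
    ((continuous_const.sub (continuous_const_mul M)).tendsto' 0 (f v) (by simp)).mono_left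
      nhdsWithin_le_nhds
  refine tendsto_of_tendsto_of_tendsto_of_le_of_le' hlow tendsto_const_nhds ?_
    (Eventually.of_forall fun _ => lb_le hf hv)
  filter_upwards [hM, self_mem_nhdsWithin] with u hu hpos
  have := (div_le_iff₀ (mem_Ioi.1 hpos)).1 hu
  linarith

lemma bddAbove_range_Jval (hf : ∀ v ∈ C.V, 0 ≤ f v) (hv : v ∈ C.V) {M : ℝ}
    (hM : ∀ᶠ u in 𝓝[>] 0, (f v - C.lb f u v) / u ≤ M) :
    BddAbove (range (C.Jval f v)) := by
  obtain ⟨N, hN⟩ := eventually_atTop.1 (tendsto_two_zpow_neg_nhdsGT.eventually hM)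
  refine IsBoundedUnder.bddAbove_range ⟨4 * M, eventually_map.2 <|
    eventually_atTop.2 ⟨N + 1, fun n hn => ?_⟩⟩
  obtain ⟨k, rfl⟩ : ∃ k, n = k + 1 := ⟨n - 1, by omega⟩
  exact (Jval_succ_le hf hv k).trans (by linarith [hN k (by omega)])

lemma hasSum_Jval (hf : ∀ v ∈ C.V, 0 ≤ f v) (hv : v ∈ C.V) {M : ℝ}
    (hM : ∀ᶠ u in 𝓝[>] 0, (f v - C.lb f u v) / u ≤ M) :
    HasSum (fun j : ℕ => C.Jval f v j * (2:ℝ) ^ (-(j:ℤ) - 1)) (f v) := by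
  rw [hasSum_iff_tendsto_nat_of_nonneg fun j => mul_nonneg (Jval_nonneg hf hv j) (by positivity)]
  simp only [← Jint_eq_sum]
  rw [← tendsto_add_atTop_iff_nat 1]
  simp only [Jint_succ]
  exact (tendsto_lb_nhdsGT hf hv hM).comp tendsto_two_zpow_neg_nhdsGT

lemma integrableOn_Jest (hf : ∀ v ∈ C.V, 0 ≤ f v) (hv : v ∈ C.V) {M : ℝ}
    (hM : ∀ᶠ u in 𝓝[>] 0, (f v - C.lb f u v) / u ≤ M) :
    IntegrableOn (fun u => C.Jest f u v) (Ioc 0 1) := by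
  obtain ⟨b, hb⟩ := bddAbove_range_Jval hf hv hM
  refine Measure.integrableOn_of_bounded (M := b) measure_Ioc_lt_top.ne
    measurable_Jest.aestronglyMeasurable (ae_of_all _ fun u => ?_)
  rw [Jest, Real.norm_of_nonneg (Jval_nonneg hf hv _)]
  exact hb (mem_range_self _)

lemma setIntegral_Jest (hf : ∀ v ∈ C.V, 0 ≤ f v) (hv : v ∈ C.V) {M : ℝ}
    (hM : ∀ᶠ u in 𝓝[>] 0, (f v - C.lb f u v) / u ≤ M) :
    ∫ u in Ioc 0 1, C.Jest f u v = f v := by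
  have hint := integrableOn_Jest hf hv hM
  rw [← iUnion_dyadicIoc] at hint ⊢
  rw [integral_iUnion measurableSet_dyadicIoc pairwise_disjoint_dyadicIoc hint,
    ← (hasSum_Jval hf hv hM).tsum_eq]
  refine tsum_congr fun j => ?_
  rw [setIntegral_congr_fun (measurableSet_dyadicIoc j) fun _ hu => Jest_eq_of_mem_dyadicIoc hu,
    setIntegral_const, volume_real_dyadicIoc, smul_eq_mul, mul_comm]

end CoordScheme

/-- `f` has a nonnegative unbiased estimator bounded on every data vector
iff for every `v ∈ V`, `limsup_{u→0⁺} (f(v) − f̲⁽ᵛ⁾(u))/u < ∞`, i.e. the quotient is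
eventually bounded above as `u → 0⁺`. -/
theorem stmt8 {r : ℕ} (C : CoordScheme r) (f : (Fin r → ℝ) → ℝ)
    (hf : ∀ v ∈ C.V, 0 ≤ f v) :
    (∃ fhat : ℝ → (Fin r → ℝ) → ℝ,
        C.IsEstimator fhat ∧ C.Nonneg fhat ∧ C.Unbiased f fhat ∧
        ∀ v ∈ C.V, BddAbove ((fun u => fhat u v) '' Set.Ioc (0:ℝ) 1)) ↔
    ∀ v ∈ C.V,
      Filter.IsBoundedUnder (· ≤ ·) (𝓝[>] (0:ℝ))
        (fun u => (f v - C.lb f u v) / u) := by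
  constructor
  · rintro ⟨fhat, hest, hnn, hub, hbdd⟩ v hv
    obtain ⟨M, hM⟩ := hbdd v hv
    refine ⟨M, eventually_map.2 ?_⟩
    filter_upwards [Ioc_mem_nhdsGT one_pos] with u hu
    exact (div_le_iff₀ hu.1).2 <|
      CoordScheme.sub_lb_le_mul hest hnn hub hv (fun x hx => hM ⟨x, hx, rfl⟩) hu
  · intro hB
    choose M hM using hB
    refine ⟨C.Jest f, ⟨fun v hv => ?_, fun u hu v _ z hz => ?_⟩, fun u _ v hv => ?_,
      fun v hv => ?_, fun v hv => ?_⟩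
    · exact CoordScheme.integrableOn_Jest hf hv (hM v hv)
    · exact (CoordScheme.Jval_eq_of_mem_Vstar (Ioc_subset_Icc_self hu) hz
        (mem_dyadicIoc_floor_neg_logb hu).2).symm
    · exact CoordScheme.Jval_nonneg hf hv _
    · exact CoordScheme.setIntegral_Jest hf hv (hM v hv)
    · obtain ⟨b, hb⟩ := CoordScheme.bddAbove_range_Jval hf hv (hM v hv)
      exact ⟨b, forall_mem_image.2 fun _ _ => hb (mem_range_self _)⟩
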